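/- Let G = (V,E) be a finite connected simple graph, let U ⊆ V be self-contained in G, and let S ⊆ U be nonempty. Define W = (N(S) ∩ U) ∖ S, for a ∈ W the cluster B(a) = {x ∈ U ∖ S : δ(a,x) ≤ δ(S,x)}, and the relation a ~ b on W by B(a) ∩ B(b) ≠ ∅. Then for all x, y ∈ U ∖ S: x and y lie in the same connected component of the subgraph of G induced on U ∖ S if and only if there exist a, b ∈ W with x ∈ B(a), y ∈ B(b), and a related to b under the reflexive-transitive closure of ~. (Hence merging overlapping clusters yields exactly the partition of U ∖ S into connected components.) -/

import Mathlib

open SimpleGraph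

/-- Distance from a set of vertices: `δ(S, v) = min_{s ∈ S} δ(s, v)`. -/
noncomputable def setDist {V : Type*} (G : SimpleGraph V) (S : Set V) (v : V) : ℕ :=
  sInf {d | ∃ s ∈ S, G.dist s v = d}

/-- `N(S) = {w : δ(S, w) ≤ 1}`. -/
noncomputable def nbrSet {V : Type*} (G : SimpleGraph V) (S : Set V) : Set V :=
  {w | setDist G S w ≤ 1}

/-- `W = (N(S) ∩ U) \ S`. -/
noncomputable def Wset {V : Type*} (G : SimpleGraph V) (U S : Set V) : Set V :=
  (nbrSet G S ∩ U) \ S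

/-- The cluster `B(a) = {x ∈ U \ S : δ(a,x) ≤ δ(S,x)}`. -/
noncomputable def cluster {V : Type*} (G : SimpleGraph V) (U S : Set V) (a : V) : Set V :=
  {x ∈ U \ S | G.dist a x ≤ setDist G S x}

/-- `U` is self-contained in `G`. -/
def SelfContained {V : Type*} (G : SimpleGraph V) (U : Set V) : Prop :=
  ∀ x ∈ U, ∀ y ∈ U, ∀ z : V, G.dist x z + G.dist z y = G.dist x y → z ∈ U

/-!
Attach each `x ∈ U \ S` to the second vertex `a` of a shortest path from `S` to `x`: then `a ∈ W`
and `δ(a,x) < δ(S,x)`, so `x ∈ B(a)`, and every neighbour `y` of `x` with `δ(S,x) ≤ δ(S,y)` lies in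
`B(a)` as well. Thus adjacent vertices of `U \ S` share a cluster, and walking along a path in
`U \ S` produces a chain of overlapping clusters. Conversely, a shortest path from `a` to
`x ∈ B(a)` stays in `U` by self-containment and avoids `S`, since a vertex of `S` on it would be
strictly closer to `x` than `a`; so every cluster is connected to its centre inside `U \ S`.
-/

/-- The relation `~` of the statement. -/
def ClustersMeet {V : Type*} (G : SimpleGraph V) (U S : Set V) (p q : V) : Prop :=
  p ∈ Wset G U S ∧ q ∈ Wset G U S ∧ (cluster G U S p ∩ cluster G U S q).Nonempty

def ClusterLinked {V : Type*} (G : SimpleGraph V) (U S : Set V) (x y : V) : Prop :=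
  ∃ a ∈ Wset G U S, ∃ b ∈ Wset G U S, x ∈ cluster G U S a ∧ y ∈ cluster G U S b ∧
    Relation.ReflTransGen (ClustersMeet G U S) a b

section

variable {V : Type*} {G : SimpleGraph V} {U S : Set V}

lemma setDist_le_dist {s : V} (hs : s ∈ S) (v : V) : setDist G S v ≤ G.dist s v :=
  Nat.sInf_le ⟨s, hs, rfl⟩

lemma exists_dist_eq_setDist (hS : S.Nonempty) (v : V) : ∃ s ∈ S, G.dist s v = setDist G S v :=
  Nat.sInf_mem (s := {d | ∃ s ∈ S, G.dist s v = d}) (hS.image (G.dist · v))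

lemma Wset_subset_diff : Wset G U S ⊆ U \ S := fun _ hc => ⟨hc.1.2, hc.2⟩

lemma SimpleGraph.Walk.dist_add_dist_of_length_eq_dist {u v z : V} (p : G.Walk u v)
    (hp : p.length = G.dist u v) (hz : z ∈ p.support) :
    G.dist u z + G.dist z v = G.dist u v := by
  classical
  have hsplit := congrArg Walk.length (p.take_spec hz)
  rw [Walk.length_append] at hsplit
  have h₁ := dist_le (p.takeUntil z hz)
  have h₂ := dist_le (p.dropUntil z hz)
  have h₃ := (p.takeUntil z hz).reachable.dist_triangle_left v
  omega

lemma reachable_induce_of_mem_cluster (hG : G.Connected) (hU : SelfContained G U) {a x : V}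
    (ha : a ∈ U \ S) (hx : x ∈ cluster G U S a) :
    (G.induce (U \ S)).Reachable ⟨a, ha⟩ ⟨x, hx.1⟩ := by
  obtain ⟨p, hp⟩ := hG.exists_walk_length_eq_dist a x
  have hsupp : ∀ z ∈ p.support, z ∈ U \ S := by
    intro z hz
    have hsplit := p.dist_add_dist_of_length_eq_dist hp hz
    refine ⟨hU a ha.1 x hx.1.1 z hsplit, fun hzS => ha.2 ?_⟩
    have hzx := setDist_le_dist (G := G) hzS x
    have haz : G.dist a z = 0 := by linarith [hx.2]
    rwa [hG.dist_eq_zero_iff.1 haz]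
  exact (p.induce (U \ S) hsupp).reachable

lemma exists_mem_Wset_dist_lt_setDist (hG : G.Connected) (hU : SelfContained G U)
    (hSU : S ⊆ U) (hS : S.Nonempty) {x : V} (hx : x ∈ U \ S) :
    ∃ a ∈ Wset G U S, x ∈ cluster G U S a ∧ G.dist a x < setDist G S x := by
  obtain ⟨s, hs, hsx⟩ := exists_dist_eq_setDist (G := G) hS x
  obtain ⟨p, hp⟩ := hG.exists_walk_length_eq_dist s x
  cases p with
  | nil => exact absurd hs hx.2
  | @cons _ a _ hsa q =>
    have hsplit := (Walk.cons hsa q).dist_add_dist_of_length_eq_dist (z := a) hp (by simp)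
    have hsa₁ : G.dist s a = 1 := dist_eq_one_iff_adj.2 hsa
    have hlt : G.dist a x < setDist G S x := by omega
    have haS : a ∉ S := fun haS => by have := setDist_le_dist (G := G) haS x; omega
    have haN : a ∈ nbrSet G S := (setDist_le_dist hs a).trans hsa₁.le
    exact ⟨a, ⟨⟨haN, hU s (hSU hs) x hx.1 a hsplit⟩, haS⟩, ⟨hx, hlt.le⟩, hlt⟩

lemma exists_mem_cluster_of_adj (hG : G.Connected) (hU : SelfContained G U) (hSU : S ⊆ U)
    (hS : S.Nonempty) {x y : V} (hx : x ∈ U \ S) (hy : y ∈ U \ S) (hxy : G.Adj x y) :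
    ∃ c ∈ Wset G U S, x ∈ cluster G U S c ∧ y ∈ cluster G U S c := by
  wlog hle : setDist G S x ≤ setDist G S y generalizing x y
  · obtain ⟨c, hc, hyc, hxc⟩ := this hy hx hxy.symm (by omega)
    exact ⟨c, hc, hxc, hyc⟩
  obtain ⟨c, hc, hxc, hlt⟩ := exists_mem_Wset_dist_lt_setDist hG hU hSU hS hx
  refine ⟨c, hc, hxc, hy, ?_⟩
  calc G.dist c y ≤ G.dist c x + G.dist x y := hG.dist_triangle
    _ = G.dist c x + 1 := by rw [dist_eq_one_iff_adj.2 hxy]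
    _ ≤ setDist G S y := by omega

lemma ClusterLinked.trans {x y z : V} (hxy : ClusterLinked G U S x y)
    (hyz : ClusterLinked G U S y z) : ClusterLinked G U S x z := by
  obtain ⟨a, ha, b, hb, hxa, hyb, hab⟩ := hxy
  obtain ⟨b', hb', c, hc, hyb', hzc, hb'c⟩ := hyz
  exact ⟨a, ha, c, hc, hxa, hzc, hab.trans (.head ⟨hb, hb', y, hyb, hyb'⟩ hb'c)⟩

lemma clusterLinked_of_reachable_induce (hG : G.Connected) (hU : SelfContained G U)
    (hSU : S ⊆ U) (hS : S.Nonempty) {x y : ↥(U \ S)} (h : (G.induce (U \ S)).Reachable x y) :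
    ClusterLinked G U S x y := by
  rw [reachable_iff_reflTransGen] at h
  induction h with
  | refl =>
    obtain ⟨a, ha, hxa, -⟩ := exists_mem_Wset_dist_lt_setDist hG hU hSU hS x.2
    exact ⟨a, ha, a, ha, hxa, hxa, .refl⟩
  | @tail y z _ hyz ih =>
    obtain ⟨c, hc, hyc, hzc⟩ := exists_mem_cluster_of_adj hG hU hSU hS y.2 z.2 hyz
    exact ih.trans ⟨c, hc, c, hc, hyc, hzc, .refl⟩

lemma reachable_induce_of_reflTransGen_clustersMeet (hG : G.Connected) (hU : SelfContained G U)
    {a b : V} (hab : Relation.ReflTransGen (ClustersMeet G U S) a b) (ha : a ∈ U \ S)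
    (hb : b ∈ U \ S) : (G.induce (U \ S)).Reachable ⟨a, ha⟩ ⟨b, hb⟩ := by
  induction hab with
  | refl => rfl
  | @tail c d _ hcd ih =>
    obtain ⟨hc, hd, w, hwc, hwd⟩ := hcd
    have hcw := reachable_induce_of_mem_cluster hG hU (Wset_subset_diff hc) hwc
    have hdw := reachable_induce_of_mem_cluster hG hU (Wset_subset_diff hd) hwd
    exact (ih (Wset_subset_diff hc)).trans (hcw.trans hdw.symm)

lemma ClusterLinked.reachable_induce (hG : G.Connected) (hU : SelfContained G U) {x y : V}
    (h : ClusterLinked G U S x y) (hx : x ∈ U \ S) (hy : y ∈ U \ S) :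
    (G.induce (U \ S)).Reachable ⟨x, hx⟩ ⟨y, hy⟩ := by
  obtain ⟨a, ha, b, hb, hxa, hyb, hab⟩ := h
  have hax := reachable_induce_of_mem_cluster hG hU (Wset_subset_diff ha) hxa
  have hby := reachable_induce_of_mem_cluster hG hU (Wset_subset_diff hb) hyb
  exact hax.symm.trans ((reachable_induce_of_reflTransGen_clustersMeet hG hU hab _ _).trans hby)

end

theorem stmt_19_general {V : Type*} (G : SimpleGraph V) (hG : G.Connected)
    (U : Set V) (hU : SelfContained G U) (S : Set V) (hSU : S ⊆ U) (hS : S.Nonempty)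
    (x y : V) (hx : x ∈ U \ S) (hy : y ∈ U \ S) :
    (G.induce (U \ S)).Reachable ⟨x, hx⟩ ⟨y, hy⟩ ↔
      ∃ a ∈ Wset G U S, ∃ b ∈ Wset G U S,
        x ∈ cluster G U S a ∧ y ∈ cluster G U S b ∧
        Relation.ReflTransGen
          (fun p q => p ∈ Wset G U S ∧ q ∈ Wset G U S ∧
            (cluster G U S p ∩ cluster G U S q).Nonempty) a b :=
  ⟨clusterLinked_of_reachable_induce hG hU hSU hS,
    fun h => ClusterLinked.reachable_induce hG hU h hx hy⟩

theorem stmt_19 {V : Type*} [Fintype V] (G : SimpleGraph V) (hG : G.Connected)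
    (U : Set V) (hU : SelfContained G U) (S : Set V) (hSU : S ⊆ U) (hS : S.Nonempty)
    (x y : V) (hx : x ∈ U \ S) (hy : y ∈ U \ S) :
    (G.induce (U \ S)).Reachable ⟨x, hx⟩ ⟨y, hy⟩ ↔
      ∃ a ∈ Wset G U S, ∃ b ∈ Wset G U S,
        x ∈ cluster G U S a ∧ y ∈ cluster G U S b ∧
        Relation.ReflTransGen
          (fun p q => p ∈ Wset G U S ∧ q ∈ Wset G U S ∧
            (cluster G U S p ∩ cluster G U S q).Nonempty) a b :=
  stmt_19_general G hG U hU S hSU hS x y hx hy
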